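/- arXiv:1904.09888 — 2 statements merged into one kernel-verified Lean document; each statement's English description precedes it below -/
import Mathlib

section
/- In a sequence of independent fair coin flips, the probability that the pattern HTH occurs (as a block of three consecutive flips) strictly before the pattern TTH occurs is 3/8. -/
/-! If HTH comes first, then before that occurrence no `T` at a time `i ≥ 1` is followed by an
`H`, since together with flip `i - 1` it would complete HTH or TTH. So HTH wins exactly when, for
some `j`, flips `1, …, j` are heads and flips `j + 1, j + 2` read `T H` (and flip `0` is `H` if
`j = 0`). These events are disjoint cylinders of probability `2⁻¹ ^ (j + 3 - min j 1)`, summing to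
`1/8 + (1/8 + 1/16 + ⋯) = 3/8`. -/

open MeasureTheory ProbabilityTheory
open scoped ENNReal

/-- The pattern `P` occurs at time `n` (i.e. within the first `n` draws
`x 0, …, x (n-1)`, as the final block of `P.length` consecutive draws). -/
def occursAt {α : Type*} (P : List α) (x : ℕ → α) (n : ℕ) : Prop :=
  P.length ≤ n ∧ ∀ i (h : i < P.length), x (n - P.length + i) = P.get ⟨i, h⟩

/-- The first time at which the pattern `P` occurs (`∞` if it never occurs). -/
noncomputable def hitTime {α : Type*} (P : List α) (x : ℕ → α) : ℝ≥0∞ :=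
  sInf ((fun n : ℕ => (n : ℝ≥0∞)) '' {n | occursAt P x n})

/-- The fair-coin distribution on `Bool` (`true` = heads `H`, `false` = tails `T`). -/
noncomputable def fairCoin : Measure Bool := (PMF.bernoulli (1/2) (by norm_num)).toMeasure

section Patterns

variable {α : Type*} {P Q : List α} {x : ℕ → α}

theorem occursAt_triple_iff {a b c : α} {n : ℕ} :
    occursAt [a, b, c] x n ↔ ∃ k, n = k + 3 ∧ x k = a ∧ x (k + 1) = b ∧ x (k + 2) = c := by
  simp only [occursAt, List.length_cons, List.length_nil]
  constructor
  · rintro ⟨hn, h⟩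
    refine ⟨n - 3, by omega, ?_, ?_, ?_⟩
    · simpa using h 0 (by norm_num)
    · simpa using h 1 (by norm_num)
    · simpa using h 2 (by norm_num)
  · rintro ⟨k, rfl, ha, hb, hc⟩
    refine ⟨by omega, fun i hi => ?_⟩
    interval_cases i <;> simpa

theorem hitTime_le_of_occursAt {n : ℕ} (h : occursAt P x n) : hitTime P x ≤ n :=
  sInf_le ⟨n, h, rfl⟩

theorem le_hitTime {n : ℕ} (h : ∀ m, occursAt P x m → n ≤ m) : (n : ℝ≥0∞) ≤ hitTime P x :=
  le_sInf <| by
    rintro _ ⟨m, hm, rfl⟩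
    exact Nat.cast_le.2 (h m hm)

theorem hitTime_lt_hitTime_iff :
    hitTime P x < hitTime Q x ↔
      ∃ n, occursAt P x n ∧ ∀ m ≤ n, ¬ occursAt Q x m := by
  classical
  constructor
  · intro h
    have hP : ∃ n, occursAt P x n := by
      by_contra! hnone
      simp [hitTime, hnone] at h
    refine ⟨Nat.find hP, Nat.find_spec hP, fun m hm hQ => ?_⟩
    have : (Nat.find hP : ℝ≥0∞) < m :=
      (le_hitTime fun k hk => Nat.find_min' hP hk).trans_lt (h.trans_le (hitTime_le_of_occursAt hQ))
    exact (Nat.cast_lt.1 this).not_ge hm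
  · rintro ⟨n, hn, hQ⟩
    calc hitTime P x ≤ n := hitTime_le_of_occursAt hn
      _ < (n + 1 : ℕ) := by exact_mod_cast n.lt_succ_self
      _ ≤ hitTime Q x := le_hitTime fun m hm => by by_contra! h; exact hQ m (by omega) hm

end Patterns

notation "HTH" => [true, false, true]
notation "TTH" => [false, false, true]

def IsHTHWindow (j : ℕ) (x : ℕ → Bool) : Prop :=
  ∀ i ∈ Finset.Icc (min j 1) (j + 2), x i = decide (i ≠ j + 1)

section Combinatorics

variable {x : ℕ → Bool}

theorem occursAt_HTH_or_TTH {k : ℕ} (h₁ : x (k + 1) = false) (h₂ : x (k + 2) = true) :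
    occursAt HTH x (k + 3) ∨ occursAt TTH x (k + 3) := by
  cases hk : x k <;> simp [occursAt_triple_iff, hk, h₁, h₂]

theorem IsHTHWindow.occursAt_HTH {j : ℕ} (h : IsHTHWindow j x) : occursAt HTH x (j + 3) :=
  occursAt_triple_iff.2 ⟨j, rfl, by simpa using h j (by simp),
    by simpa using h (j + 1) (by simp), by simpa using h (j + 2) (by simp)⟩

theorem IsHTHWindow.not_occursAt_TTH {j m : ℕ} (h : IsHTHWindow j x) (hm : m ≤ j + 3) :
    ¬ occursAt TTH x m := by
  intro hm'
  obtain ⟨k, rfl, hk, hk₁, -⟩ := occursAt_triple_iff.1 hm'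
  rcases (show k + 1 ≤ j ∨ k = j by omega) with hlt | rfl
  · have := h (k + 1) (Finset.mem_Icc.2 ⟨by omega, by omega⟩)
    simp [hk₁] at this
    omega
  · simpa [hk] using h k (by simp)

theorem IsHTHWindow.le {j k : ℕ} (hj : IsHTHWindow j x) (hk : IsHTHWindow k x) : j ≤ k := by
  by_contra! hlt
  have hT := hk (k + 1) (by simp)
  have hH := hj (k + 1) (Finset.mem_Icc.2 ⟨by omega, by omega⟩)
  simp only [ne_eq, not_true_eq_false, decide_false] at hT
  simp [hT] at hH
  omega

theorem IsHTHWindow.eq {j k : ℕ} (hj : IsHTHWindow j x) (hk : IsHTHWindow k x) : j = k :=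
  (hj.le hk).antisymm (hk.le hj)

theorem isHTHWindow_of_first {k : ℕ} (hHTH : occursAt HTH x (k + 3))
    (hfirst : ∀ m < k + 3, ¬ occursAt HTH x m) (hTTH : ∀ m ≤ k + 3, ¬ occursAt TTH x m) :
    IsHTHWindow k x := by
  obtain ⟨k', hk', hH, hT, hH'⟩ := occursAt_triple_iff.1 hHTH
  obtain rfl : k = k' := by omega
  have hpersist (l : ℕ) (hl : 1 ≤ l) (hlk : l < k) (hT : x l = false) : x (l + 1) = false := by
    obtain ⟨l, rfl⟩ : ∃ l', l = l' + 1 := ⟨l - 1, by omega⟩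
    by_contra hH
    rcases occursAt_HTH_or_TTH hT (Bool.not_eq_false _ ▸ hH) with h | h
    · exact hfirst _ (by omega) h
    · exact hTTH _ (by omega) h
  intro i hi
  rw [Finset.mem_Icc] at hi
  rcases (show i < k ∨ i = k ∨ i = k + 1 ∨ i = k + 2 by omega) with hik | rfl | rfl | rfl
  · rw [decide_eq_true (by omega)]
    by_contra hi
    have hfalse := Nat.le_induction (P := fun l _ => l ≤ k → x l = false)
      (fun _ => Bool.not_eq_true _ ▸ hi)
      (fun l hil ih hlk => hpersist l (by omega) (by omega) (ih (by omega))) k hik.le le_rfl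
    simp [hH] at hfalse
  · simpa using hH
  · simpa using hT
  · simpa using hH'

theorem hitTime_HTH_lt_hitTime_TTH_iff :
    hitTime HTH x < hitTime TTH x ↔ ∃ j, IsHTHWindow j x := by
  classical
  rw [hitTime_lt_hitTime_iff]
  constructor
  · rintro ⟨n, hHTH, hTTH⟩
    have hex : ∃ n, occursAt HTH x n := ⟨n, hHTH⟩
    obtain ⟨k, hk, -⟩ := occursAt_triple_iff.1 (Nat.find_spec hex)
    have hle : Nat.find hex ≤ n := Nat.find_min' hex hHTH
    exact ⟨k, isHTHWindow_of_first (hk ▸ Nat.find_spec hex) (hk ▸ fun m => Nat.find_min hex)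
      fun m hm => hTTH m (by omega)⟩
  · rintro ⟨j, hj⟩
    exact ⟨j + 3, hj.occursAt_HTH, fun m => hj.not_occursAt_TTH⟩

end Combinatorics

theorem fairCoin_singleton (b : Bool) : fairCoin {b} = 2⁻¹ := by
  rw [fairCoin, PMF.toMeasure_apply_singleton _ _ (measurableSet_singleton b), PMF.bernoulli_apply]
  cases b <;> norm_num

theorem measure_forall_mem_eq_of_iIndepFun {Ω ι : Type*} [MeasurableSpace Ω] {μ : Measure Ω}
    {X : ι → Ω → Bool} (hmeas : ∀ i, Measurable (X i)) (hindep : iIndepFun X μ)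
    (hfair : ∀ i, μ.map (X i) = fairCoin) (s : Finset ι) (b : ι → Bool) :
    μ {ω | ∀ i ∈ s, X i ω = b i} = 2⁻¹ ^ s.card := by
  have hset : {ω | ∀ i ∈ s, X i ω = b i} = ⋂ i ∈ s, X i ⁻¹' {b i} := by ext; simp
  rw [hset, hindep.measure_inter_preimage_eq_mul s fun i _ => measurableSet_singleton (b i),
    Finset.prod_congr rfl fun i _ => ?_, Finset.prod_const]
  rw [← Measure.map_apply (hmeas i) (measurableSet_singleton _), hfair i, fairCoin_singleton]

theorem tsum_inv_two_pow_card_Icc_min_one :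
    ∑' j : ℕ, (2⁻¹ : ℝ≥0∞) ^ (Finset.Icc (min j 1) (j + 2)).card = 3 / 8 := by
  have hcard₀ : (Finset.Icc (min 0 1) (0 + 2)).card = 3 := rfl
  have hcard (j : ℕ) : (Finset.Icc (min (j + 1) 1) (j + 1 + 2)).card = j + 3 := by simp
  rw [tsum_eq_zero_add' ENNReal.summable]
  simp only [hcard₀, hcard, pow_add, ENNReal.tsum_mul_right, ENNReal.tsum_geometric,
    ENNReal.one_sub_inv_two, inv_inv]
  rw [← ENNReal.inv_pow, ENNReal.div_eq_inv_mul]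
  ring_nf

theorem stmt_0_general {Ω : Type*} [MeasurableSpace Ω] (μ : Measure Ω)
    (X : ℕ → Ω → Bool) (hmeas : ∀ n, Measurable (X n))
    (hindep : iIndepFun X μ)
    (hfair : ∀ n, μ.map (X n) = fairCoin) :
    μ {ω | hitTime [true, false, true] (fun n => X n ω)
         < hitTime [false, false, true] (fun n => X n ω)} = 3/8 := by
  have hunion : {ω | hitTime HTH (fun n => X n ω) < hitTime TTH (fun n => X n ω)} =
      ⋃ j, {ω | IsHTHWindow j (fun n => X n ω)} := by
    ext ω
    simp only [Set.mem_setOf_eq, Set.mem_iUnion, hitTime_HTH_lt_hitTime_TTH_iff]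
  have hmeasSet (j : ℕ) : MeasurableSet {ω | IsHTHWindow j (fun n => X n ω)} := by
    simp only [IsHTHWindow, Set.setOf_forall]
    exact .biInter (Set.to_countable _) fun i _ => measurableSet_eq_fun (hmeas i) measurable_const
  rw [hunion, measure_iUnion (fun j k hjk => Set.disjoint_left.2 fun ω hj hk => hjk (hj.eq hk))
    hmeasSet]
  simp only [IsHTHWindow, measure_forall_mem_eq_of_iIndepFun hmeas hindep hfair]
  exact tsum_inv_two_pow_card_Icc_min_one

/-- In i.i.d. fair coin flips, P(HTH occurs strictly before TTH) = 3/8. -/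
theorem stmt_0 {Ω : Type*} [MeasurableSpace Ω] (μ : Measure Ω) [IsProbabilityMeasure μ]
    (X : ℕ → Ω → Bool) (hmeas : ∀ n, Measurable (X n))
    (hindep : iIndepFun X μ)
    (hfair : ∀ n, μ.map (X n) = fairCoin) :
    μ {ω | hitTime [true, false, true] (fun n => X n ω)
         < hitTime [false, false, true] (fun n => X n ω)} = 3/8 :=
  stmt_0_general μ X hmeas hindep hfair
end

section
/- For a fair coin and distinct length-k patterns A, B (k ≥ 1, neither a substring of the other), the quantities R_A(A) − R_A(B) and R_B(B) − R_B(A) are strictly positive, where R_X(Y) = sum over s from 1 to k of 2^{k-s+1} · [trailing (k−s+1) characters of X equal leading (k−s+1) characters of Y]. -/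
open MeasureTheory ProbabilityTheory
open scoped ENNReal

/-- R_X(Y) = ∑_{s=1}^{k} 2^{k-s+1} · [trailing (k-s+1) characters of X
= leading (k-s+1) characters of Y], for patterns of common length k. -/
def Rpay (X Y : List Bool) : ℕ :=
  ∑ s ∈ Finset.Icc 1 X.length,
    if X.drop (s - 1) = Y.take (X.length - s + 1) then 2 ^ (X.length - s + 1) else 0

/-
The full overlap `s = 1` contributes `2 ^ k` to `R_X(Y)` exactly when `X` is a prefix of `Y`, and all the
proper overlaps together contribute at most `2 ^ (k-1) + ⋯ + 2 < 2 ^ k`.  Hence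
`R_A(A) ≥ 2 ^ k > R_A(B)`, and symmetrically for `B`.
-/

lemma sum_Icc_two_pow_sub_add_one_lt (n : ℕ) : ∑ s ∈ Finset.Icc 2 n, 2 ^ (n - s + 1) < 2 ^ n := by
  rw [← Finset.sum_image (g := fun s => n - s + 1) (s := Finset.Icc 2 n) (f := (2 ^ ·))
    (fun a ha b hb h => by simp only [Finset.coe_Icc, Set.mem_Icc] at ha hb h; omega)]
  exact Nat.geomSum_lt le_rfl (by simp only [Finset.mem_image, Finset.mem_Icc]; omega)

lemma Rpay_eq_prefix_add {X : List Bool} (hX : X ≠ []) (Y : List Bool) :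
    Rpay X Y = (if X <+: Y then 2 ^ X.length else 0) +
      ∑ s ∈ Finset.Icc 2 X.length,
        if X.drop (s - 1) = Y.take (X.length - s + 1) then 2 ^ (X.length - s + 1) else 0 := by
  have hlen : 1 ≤ X.length := List.length_pos_iff.mpr hX
  rw [Rpay, ← Finset.insert_Icc_add_one_left_eq_Icc hlen, Finset.sum_insert (by simp),
    Nat.sub_add_cancel hlen]
  simp [List.prefix_iff_eq_take]

lemma pow_length_le_Rpay_self {X : List Bool} (hX : X ≠ []) : 2 ^ X.length ≤ Rpay X X := by
  rw [Rpay_eq_prefix_add hX, if_pos (List.prefix_refl X)]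
  exact Nat.le_add_right _ _

lemma Rpay_lt_pow_length {X Y : List Bool} (hXY : ¬ X <+: Y) : Rpay X Y < 2 ^ X.length := by
  rcases eq_or_ne X [] with rfl | hX
  · simp [Rpay]
  rw [Rpay_eq_prefix_add hX, if_neg hXY, zero_add]
  refine lt_of_le_of_lt (Finset.sum_le_sum fun s _ => ?_) (sum_Icc_two_pow_sub_add_one_lt _)
  split <;> simp

theorem stmt_10_general (k : ℕ) (hk : 1 ≤ k) (A B : List Bool)
    (hA : A.length = k) (hB : B.length = k) (hAB : A ≠ B) :
    0 < (Rpay A A : ℤ) - Rpay A B ∧ 0 < (Rpay B B : ℤ) - Rpay B A := by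
  have hA0 : A ≠ [] := List.ne_nil_of_length_pos (by omega)
  have hB0 : B ≠ [] := List.ne_nil_of_length_pos (by omega)
  have hAB' : ¬ A <+: B := fun h => hAB (h.eq_of_length (hA.trans hB.symm))
  have hBA' : ¬ B <+: A := fun h => hAB (h.eq_of_length (hB.trans hA.symm)).symm
  have := pow_length_le_Rpay_self hA0
  have := pow_length_le_Rpay_self hB0
  have := Rpay_lt_pow_length hAB'
  have := Rpay_lt_pow_length hBA'
  omega

/-- For distinct length-k fair-coin patterns A, B (k ≥ 1, neither a substring of the other),
R_A(A) − R_A(B) and R_B(B) − R_B(A) are strictly positive. -/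
theorem stmt_10 (k : ℕ) (hk : 1 ≤ k) (A B : List Bool)
    (hA : A.length = k) (hB : B.length = k) (hAB : A ≠ B)
    (hAinfB : ¬ A.IsInfix B) (hBinfA : ¬ B.IsInfix A) :
    0 < (Rpay A A : ℤ) - Rpay A B ∧ 0 < (Rpay B B : ℤ) - Rpay B A :=
  stmt_10_general k hk A B hA hB hAB
end
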